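/- For μ = (μ_1, μ_2) a composition of M+N, the Gauss decomposition blocks of the super Yangian satisfy (u-v)[D_{1;i,j}(u), E_{1;h,k}(v)] = (-1)^{|h|_1 |j|_1} δ_{hj} sum_{p=1}^{μ_1} D_{1;i,p}(u) ( E_{1;p,k}(v) - E_{1;p,k}(u) ) for all 1 ≤ i,j,h ≤ μ_1 and 1 ≤ k ≤ μ_2. -/

import Mathlib

/-!
Work in `A[[u⁻¹]][[v⁻¹]]`, where `u⁻¹ v⁻¹ (u - v) = v⁻¹ - u⁻¹` is central.
In the first block `t_{ij} = D_{1;ij}`, and `t_{h,μ₁+k}(v) = Σ_q D_{1;hq}(v) E_{1;qk}(v)`.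
Expanding `(u - v)[D_{1;ij}(u), t_{h,μ₁+k}(v)]` by the Leibniz rule and evaluating it and the
terms `(u - v)[D_{1;ij}(u), D_{1;hq}(v)]` with the RTT relation leaves
`Σ_q ± D_{1;hq}(v) (u - v)[D_{1;ij}(u), E_{1;qk}(v)] = ± D_{1;hj}(v) Σ_q D_{1;iq}(u)(E_{1;qk}(v) - E_{1;qk}(u))`
for every `h`; multiplying by `D_1(v)⁻¹` on the left isolates the commutator.
-/

noncomputable section

namespace SuperYangian

/-- The sign `(-1)^x` for `x : ZMod 2`. -/
def sgn (x : ZMod 2) : ℂ := if x = 0 then 1 else -1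

variable {A : Type*}

/-- The supercommutator `[x, y] = x*y - ε • (y*x)` with prescribed sign `ε`
(for homogeneous `x`, `y` one takes `ε = (-1)^{|x||y|}`). -/
def scomm [Ring A] [Algebra ℂ A] (ε : ℂ) (x y : A) : A := x * y - ε • (y * x)

/-- `off μ a = μ 0 + ⋯ + μ (a-1)`. -/
def off (μ : ℕ → ℕ) (a : ℕ) : ℕ := ∑ b ∈ Finset.range a, μ b

/-- A family `t i j r` (the coefficient of `u^{-r}` in `t_{ij}(u)`, with 0-based
indices `i j < d`) satisfying the defining RTT relations of the super Yangian
`Y(gl_{M|N})` with parity sequence `p`; the super Yangian itself, via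
`t_{i+1,j+1}^{(r)} = t i j r`, is the universal such family. -/
structure RTT (A : Type*) [Ring A] [Algebra ℂ A] (d : ℕ) (p : ℕ → ZMod 2) where
  t : ℕ → ℕ → ℕ → A
  t_zero : ∀ i j, t i j 0 = if i = j then (1 : A) else 0
  rtt : ∀ i j h k r s : ℕ, i < d → j < d → h < d → k < d →
    scomm (sgn ((p i + p j) * (p h + p k))) (t i j r) (t h k s) =
      sgn (p i * p j + p i * p h + p j * p h) •
        ∑ g ∈ Finset.range (min r s),
          (t h j g * t i k (r + s - 1 - g) - t h j (r + s - 1 - g) * t i k g)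

/-- Gauss decomposition data `T(u) = F(u) D(u) E(u)` with respect to the composition
`μ = (μ 0, …, μ (n-1))`, in coefficient form.  `E a b i j r` is the coefficient of
`u^{-r}` in the `(i,j)`-entry of the block `E_{a,b}(u)` (0-based blocks and entries),
extended by the identity on the diagonal blocks and by `0` below them; similarly `F`.
`D a` are the diagonal blocks and `D' a` their inverses.  Since the Gauss
decomposition is unique, this data consists exactly of the quasideterminant blocks. -/
structure Gauss [Ring A] [Algebra ℂ A] (T : ℕ → ℕ → ℕ → A) (n : ℕ) (μ : ℕ → ℕ) where
  D : ℕ → ℕ → ℕ → ℕ → A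
  D' : ℕ → ℕ → ℕ → ℕ → A
  E : ℕ → ℕ → ℕ → ℕ → ℕ → A
  F : ℕ → ℕ → ℕ → ℕ → ℕ → A
  E_diag : ∀ a i j r, E a a i j r = if i = j ∧ r = 0 then 1 else 0
  E_low : ∀ a b i j r, b < a → E a b i j r = 0
  E_zero : ∀ a b i j, a < b → E a b i j 0 = 0
  F_diag : ∀ a i j r, F a a i j r = if i = j ∧ r = 0 then 1 else 0
  F_high : ∀ a b i j r, a < b → F a b i j r = 0
  F_zero : ∀ a b i j, b < a → F a b i j 0 = 0
  D_zero : ∀ a i j, D a i j 0 = if i = j then (1 : A) else 0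
  D_inv : ∀ a i j r, a < n → i < μ a → j < μ a →
    ∑ q ∈ Finset.range (μ a), ∑ e ∈ Finset.range (r + 1), D a i q e * D' a q j (r - e) =
      if i = j ∧ r = 0 then 1 else 0
  D_inv' : ∀ a i j r, a < n → i < μ a → j < μ a →
    ∑ q ∈ Finset.range (μ a), ∑ e ∈ Finset.range (r + 1), D' a i q e * D a q j (r - e) =
      if i = j ∧ r = 0 then 1 else 0
  decomp : ∀ a b i j r, a < n → b < n → i < μ a → j < μ b →
    T (off μ a + i) (off μ b + j) r =
      ∑ c ∈ Finset.range n, ∑ q1 ∈ Finset.range (μ c), ∑ q2 ∈ Finset.range (μ c),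
        ∑ e1 ∈ Finset.range (r + 1), ∑ e2 ∈ Finset.range (r + 1 - e1),
          F a c i q1 e1 * D c q1 q2 e2 * E c b q2 j (r - e1 - e2)

/-- Formal power series in `u⁻¹` and `v⁻¹`; `v⁻¹` is the outer variable. -/
abbrev Series₂ (A : Type*) [Ring A] : Type _ := PowerSeries (PowerSeries A)

namespace Series₂

variable {A : Type*} [Ring A]

def inU : PowerSeries A →+* Series₂ A := PowerSeries.C

def inV : PowerSeries A →+* Series₂ A := PowerSeries.map PowerSeries.C

def uInv : Series₂ A := inU PowerSeries.X

def vInv : Series₂ A := PowerSeries.X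

/-- The coefficient of `u^{-r} v^{-s}`. -/
def coeff (r s : ℕ) : Series₂ A →+ A :=
  (PowerSeries.coeff r).toAddMonoidHom.comp (PowerSeries.coeff s).toAddMonoidHom

lemma coeff_apply (r s : ℕ) (F : Series₂ A) :
    coeff r s F = PowerSeries.coeff r (PowerSeries.coeff s F) := rfl

@[ext]
lemma ext {F G : Series₂ A} (h : ∀ r s, coeff r s F = coeff r s G) : F = G :=
  PowerSeries.ext fun s => PowerSeries.ext fun r => h r s

lemma coeff_smul [Algebra ℂ A] (r s : ℕ) (c : ℂ) (F : Series₂ A) :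
    coeff r s (c • F) = c • coeff r s F := by
  simp [coeff_apply]

lemma coeff_inU (r s : ℕ) (φ : PowerSeries A) :
    coeff r s (inU φ) = if s = 0 then PowerSeries.coeff r φ else 0 := by
  rw [coeff_apply, inU, PowerSeries.coeff_C]
  split_ifs <;> simp

lemma coeff_inU_mul_inV (r s : ℕ) (φ ψ : PowerSeries A) :
    coeff r s (inU φ * inV ψ) = PowerSeries.coeff r φ * PowerSeries.coeff s ψ := by
  rw [coeff_apply, inU, inV, PowerSeries.coeff_C_mul, PowerSeries.coeff_map,
    PowerSeries.coeff_mul_C]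

lemma coeff_inV_mul_inU (r s : ℕ) (φ ψ : PowerSeries A) :
    coeff r s (inV ψ * inU φ) = PowerSeries.coeff s ψ * PowerSeries.coeff r φ := by
  rw [coeff_apply, inU, inV, PowerSeries.coeff_mul_C, PowerSeries.coeff_map,
    PowerSeries.coeff_C_mul]

lemma coeff_uInv_mul_succ (r s : ℕ) (F : Series₂ A) :
    coeff (r + 1) s (uInv * F) = coeff r s F := by
  rw [coeff_apply, uInv, inU, PowerSeries.coeff_C_mul, PowerSeries.coeff_succ_X_mul,
    coeff_apply]

lemma coeff_uInv_mul_zero (s : ℕ) (F : Series₂ A) : coeff 0 s (uInv * F) = 0 := by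
  rw [coeff_apply, uInv, inU, PowerSeries.coeff_C_mul, PowerSeries.coeff_zero_X_mul]

lemma coeff_vInv_mul_succ (r s : ℕ) (F : Series₂ A) :
    coeff r (s + 1) (vInv * F) = coeff r s F := by
  rw [coeff_apply, vInv, PowerSeries.coeff_succ_X_mul, coeff_apply]

lemma coeff_vInv_mul_zero (r : ℕ) (F : Series₂ A) : coeff r 0 (vInv * F) = 0 := by
  rw [coeff_apply, vInv, PowerSeries.coeff_zero_X_mul, map_zero]

lemma coeff_succ_succ_uInv_mul_vInv_mul (r s : ℕ) (F : Series₂ A) :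
    coeff (r + 1) (s + 1) (uInv * vInv * F) = coeff r s F := by
  rw [mul_assoc, coeff_uInv_mul_succ, coeff_vInv_mul_succ]

lemma uInv_commute (F : Series₂ A) : Commute uInv F :=
  PowerSeries.ext fun s => by
    rw [uInv, inU, PowerSeries.coeff_C_mul, PowerSeries.coeff_mul_C,
      (PowerSeries.commute_X _).eq]

lemma vInv_commute (F : Series₂ A) : Commute vInv F := (PowerSeries.commute_X F).symm

end Series₂

lemma sgn_add (a b : ZMod 2) : sgn (a + b) = sgn a * sgn b := by
  have cases : ∀ a : ZMod 2, a = 0 ∨ a = 1 := by decide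
  rcases cases a with rfl | rfl <;> rcases cases b with rfl | rfl <;>
    simp [sgn, show (1 + 1 : ZMod 2) = 0 from rfl]

lemma sgn_smul_sgn_smul {M : Type*} [AddCommGroup M] [Module ℂ M] (a : ZMod 2) (x : M) :
    sgn a • sgn a • x = x := by
  rw [smul_smul, ← sgn_add, ZModModule.add_self, sgn, if_pos rfl, one_smul]

section Supercommutator

variable [Ring A] [Algebra ℂ A]

lemma scomm_mul_right (ε₁ ε₂ : ℂ) (x b c : A) :
    scomm (ε₁ * ε₂) x (b * c) = scomm ε₁ x b * c + ε₁ • (b * scomm ε₂ x c) := by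
  simp only [scomm, sub_mul, mul_sub, smul_mul_assoc, mul_smul_comm, smul_smul, smul_sub,
    mul_assoc]
  abel

lemma scomm_sum_right {ι : Type*} (t : Finset ι) (ε : ℂ) (x : A) (f : ι → A) :
    scomm ε x (∑ y ∈ t, f y) = ∑ y ∈ t, scomm ε x (f y) := by
  simp only [scomm, Finset.mul_sum, Finset.sum_mul, Finset.smul_sum, Finset.sum_sub_distrib]

lemma mul_scomm_sum_mul {z x : A} (hz : ∀ y, Commute z y) (t : Finset ℕ) {ε : ℂ}
    (ε₁ ε₂ : ℕ → ℂ) (hε : ∀ q ∈ t, ε = ε₁ q * ε₂ q) (b c : ℕ → A) :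
    z * scomm ε x (∑ q ∈ t, b q * c q) =
      ∑ q ∈ t, z * scomm (ε₁ q) x (b q) * c q +
        ∑ q ∈ t, ε₁ q • (b q * (z * scomm (ε₂ q) x (c q))) := by
  rw [scomm_sum_right, Finset.mul_sum, ← Finset.sum_add_distrib]
  refine Finset.sum_congr rfl fun q hq => ?_
  rw [hε q hq, scomm_mul_right, mul_add, ← mul_assoc, mul_smul_comm, ← mul_assoc,
    (hz (b q)).eq, mul_assoc (b q)]

end Supercommutator

namespace Series₂

variable [Ring A] [Algebra ℂ A]

lemma coeff_scomm_inU_inV (r s : ℕ) (ε : ℂ) (φ ψ : PowerSeries A) :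
    coeff r s (scomm ε (inU φ) (inV ψ)) =
      scomm ε (PowerSeries.coeff r φ) (PowerSeries.coeff s ψ) := by
  rw [scomm, scomm, map_sub, coeff_smul, coeff_inU_mul_inV, coeff_inV_mul_inU]

lemma coeff_succ_succ_sub_mul_scomm (r s : ℕ) (ε : ℂ) (φ ψ : PowerSeries A) :
    coeff (r + 1) (s + 1) ((vInv - uInv) * scomm ε (inU φ) (inV ψ)) =
      scomm ε (PowerSeries.coeff (r + 1) φ) (PowerSeries.coeff s ψ) -
        scomm ε (PowerSeries.coeff r φ) (PowerSeries.coeff (s + 1) ψ) := by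
  rw [sub_mul, map_sub, coeff_vInv_mul_succ, coeff_uInv_mul_succ, coeff_scomm_inU_inV,
    coeff_scomm_inU_inV]

end Series₂

section RTTSeries

open Series₂

variable [Ring A] [Algebra ℂ A] {d : ℕ} {p : ℕ → ZMod 2}

lemma RTT.scomm_t_zero_left (S : RTT A d p) (i j h k : ℕ) (y : A) :
    scomm (sgn ((p i + p j) * (p h + p k))) (S.t i j 0) y = 0 := by
  rw [S.t_zero]
  split_ifs with hij
  · rw [hij, ZModModule.add_self, zero_mul, sgn, if_pos rfl, scomm, one_smul, one_mul,
      mul_one, sub_self]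
  · rw [scomm, zero_mul, mul_zero, smul_zero, sub_zero]

lemma RTT.scomm_t_zero_right (S : RTT A d p) (i j h k : ℕ) (x : A) :
    scomm (sgn ((p i + p j) * (p h + p k))) x (S.t h k 0) = 0 := by
  rw [S.t_zero]
  split_ifs with hhk
  · rw [hhk, ZModModule.add_self, mul_zero, sgn, if_pos rfl, scomm, one_smul, one_mul,
      mul_one, sub_self]
  · rw [scomm, zero_mul, mul_zero, smul_zero, sub_zero]

lemma RTT.scomm_succ_sub_scomm_succ (S : RTT A d p) {i j h k : ℕ} (hi : i < d) (hj : j < d)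
    (hh : h < d) (hk : k < d) (r s : ℕ) :
    scomm (sgn ((p i + p j) * (p h + p k))) (S.t i j (r + 1)) (S.t h k s) -
      scomm (sgn ((p i + p j) * (p h + p k))) (S.t i j r) (S.t h k (s + 1)) =
      sgn (p i * p j + p i * p h + p j * p h) •
        (S.t h j r * S.t i k s - S.t h j s * S.t i k r) := by
  rw [S.rtt i j h k (r + 1) s hi hj hh hk, S.rtt i j h k r (s + 1) hi hj hh hk, ← smul_sub]
  congr 1
  have e1 : ∀ g, r + 1 + s - 1 - g = r + s - g := fun g => by omega
  have e2 : ∀ g, r + (s + 1) - 1 - g = r + s - g := fun g => by omega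
  simp_rw [e1, e2]
  rcases lt_trichotomy r s with hlt | rfl | hgt
  · rw [show min (r + 1) s = r + 1 by omega, show min r (s + 1) = r by omega,
      Finset.sum_range_succ, show r + s - r = s by omega, add_sub_cancel_left]
  · rw [show min (r + 1) r = r by omega, show min r (r + 1) = r by omega, sub_self, sub_self]
  · rw [show min (r + 1) s = s by omega, show min r (s + 1) = s + 1 by omega,
      Finset.sum_range_succ, show r + s - s = r by omega, sub_add_cancel_left, neg_sub]

/-- The RTT relation
`(u - v) [t_{ij}(u), t_{hk}(v)] = ± (t_{hj}(u) t_{ik}(v) - t_{hj}(v) t_{ik}(u))`,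
multiplied by `u⁻¹ v⁻¹`. -/
theorem RTT.series (S : RTT A d p) {i j h k : ℕ} (hi : i < d) (hj : j < d) (hh : h < d)
    (hk : k < d) :
    (vInv - uInv) * scomm (sgn ((p i + p j) * (p h + p k)))
        (inU (PowerSeries.mk (S.t i j))) (inV (PowerSeries.mk (S.t h k))) =
      sgn (p i * p j + p i * p h + p j * p h) • (uInv * vInv *
        (inU (PowerSeries.mk (S.t h j)) * inV (PowerSeries.mk (S.t i k)) -
          inV (PowerSeries.mk (S.t h j)) * inU (PowerSeries.mk (S.t i k)))) := by
  ext r s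
  rw [coeff_smul]
  rcases r with _ | r <;> rcases s with _ | s
  · rw [mul_assoc, coeff_uInv_mul_zero, sub_mul, map_sub, coeff_vInv_mul_zero,
      coeff_uInv_mul_zero, sub_zero, smul_zero]
  · rw [mul_assoc, coeff_uInv_mul_zero, sub_mul, map_sub, coeff_vInv_mul_succ,
      coeff_uInv_mul_zero, sub_zero, coeff_scomm_inU_inV, PowerSeries.coeff_mk,
      scomm_t_zero_left, smul_zero]
  · rw [(uInv_commute vInv).eq, mul_assoc, coeff_vInv_mul_zero, sub_mul, map_sub,
      coeff_vInv_mul_zero, coeff_uInv_mul_succ, zero_sub, coeff_scomm_inU_inV,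
      PowerSeries.coeff_mk, PowerSeries.coeff_mk, scomm_t_zero_right, neg_zero, smul_zero]
  · rw [coeff_succ_succ_sub_mul_scomm, mul_assoc, coeff_uInv_mul_succ, coeff_vInv_mul_succ,
      map_sub, coeff_inU_mul_inV, coeff_inV_mul_inU]
    simp only [PowerSeries.coeff_mk]
    exact S.scomm_succ_sub_scomm_succ hi hj hh hk r s

end RTTSeries

section GaussDecomposition

variable [Ring A]

lemma coeff_mk_mul_mk (f g : ℕ → A) (r : ℕ) :
    PowerSeries.coeff r (PowerSeries.mk f * PowerSeries.mk g) =
      ∑ e ∈ Finset.range (r + 1), f e * g (r - e) := by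
  rw [PowerSeries.coeff_mul, Finset.Nat.sum_antidiagonal_eq_sum_range_succ_mk]
  simp only [PowerSeries.coeff_mk]

variable [Algebra ℂ A] {T : ℕ → ℕ → ℕ → A} {n : ℕ} {μ : ℕ → ℕ}

lemma Gauss.T_first_row_eq_D_mul_E (G : Gauss T n μ) {b i j : ℕ} (hb : b < n) (hi : i < μ 0)
    (hj : j < μ b) (r : ℕ) :
    T i (off μ b + j) r =
      ∑ q ∈ Finset.range (μ 0), ∑ e ∈ Finset.range (r + 1), G.D 0 i q e * G.E 0 b q j (r - e) := by
  have h := G.decomp 0 b i j r (by omega) hb hi hj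
  rw [off, Finset.sum_range_zero, zero_add] at h
  rw [h, Finset.sum_eq_single_of_mem 0 (Finset.mem_range.2 (by omega))]
  · simp [G.F_diag, ite_and, Finset.sum_ite_irrel, hi]
  · intro c _ hc
    simp [G.F_high 0 c _ _ _ (Nat.pos_of_ne_zero hc)]

lemma Gauss.mk_T_first_row_eq_D_mul_E (G : Gauss T n μ) {b i j : ℕ} (hb : b < n) (hi : i < μ 0)
    (hj : j < μ b) :
    PowerSeries.mk (T i (off μ b + j)) =
      ∑ q ∈ Finset.range (μ 0), PowerSeries.mk (G.D 0 i q) * PowerSeries.mk (G.E 0 b q j) := by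
  ext r
  simp only [PowerSeries.coeff_mk, map_sum, coeff_mk_mul_mk, G.T_first_row_eq_D_mul_E hb hi hj]

lemma Gauss.sum_mk_D'_mul_mk_D (G : Gauss T n μ) {a m q : ℕ} (ha : a < n) (hm : m < μ a)
    (hq : q < μ a) :
    ∑ h ∈ Finset.range (μ a), PowerSeries.mk (G.D' a m h) * PowerSeries.mk (G.D a h q) =
      if m = q then 1 else 0 := by
  ext r
  rw [map_sum]
  simp only [coeff_mk_mul_mk, G.D_inv' a m q r ha hm hq]
  split_ifs <;> simp_all [PowerSeries.coeff_one]

lemma Gauss.mk_E_diag (G : Gauss T n μ) (a i j : ℕ) :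
    PowerSeries.mk (G.E a a i j) = if i = j then 1 else 0 := by
  ext r
  rw [PowerSeries.coeff_mk, G.E_diag, apply_ite (PowerSeries.coeff r), PowerSeries.coeff_one,
    map_zero]
  by_cases hij : i = j <;> simp [hij]

lemma Gauss.mk_T_eq_mk_D (G : Gauss T n μ) (hn : 0 < n) {i j : ℕ} (hi : i < μ 0)
    (hj : j < μ 0) : PowerSeries.mk (T i j) = PowerSeries.mk (G.D 0 i j) := by
  have h := G.mk_T_first_row_eq_D_mul_E hn hi hj
  rw [off, Finset.sum_range_zero, zero_add] at h
  simp [h, G.mk_E_diag, hj]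

end GaussDecomposition

lemma eq_ite_of_sum_mul_eq_mul {R : Type*} [Ring R] {n j m : ℕ} {B B' : ℕ → ℕ → R}
    {w : ℕ → R} {c : R}
    (hB : ∀ q < n, ∑ h ∈ Finset.range n, B' m h * B h q = if m = q then 1 else 0)
    (hw : ∀ h < n, ∑ q ∈ Finset.range n, B h q * w q = B h j * c) (hj : j < n) (hm : m < n) :
    w m = if m = j then c else 0 := by
  calc
    w m = ∑ q ∈ Finset.range n, (if m = q then 1 else 0) * w q := by simp [hm]
    _ = ∑ h ∈ Finset.range n, B' m h * ∑ q ∈ Finset.range n, B h q * w q := by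
      simp only [Finset.mul_sum, ← mul_assoc]
      rw [Finset.sum_comm]
      refine Finset.sum_congr rfl fun q hq => ?_
      rw [← hB q (Finset.mem_range.1 hq), Finset.sum_mul]
    _ = (∑ h ∈ Finset.range n, B' m h * B h j) * c := by
      rw [Finset.sum_mul]
      refine Finset.sum_congr rfl fun h hh => ?_
      rw [hw h (Finset.mem_range.1 hh), mul_assoc]
    _ = if m = j then c else 0 := by
      rw [hB j hj]
      split_ifs <;> simp

section FirstBlock

open Series₂

variable [Ring A] [Algebra ℂ A] {d : ℕ} {p : ℕ → ZMod 2} {μ : ℕ → ℕ}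

lemma off_two (μ : ℕ → ℕ) : off μ 2 = μ 0 + μ 1 := by
  rw [off, Finset.sum_range_succ, Finset.sum_range_one]

theorem series_scomm_D_D (S : RTT A d p) (G : Gauss S.t 2 μ) (hd : off μ 2 = d)
    {i j h q : ℕ} (hi : i < μ 0) (hj : j < μ 0) (hh : h < μ 0) (hq : q < μ 0) :
    (vInv - uInv) * scomm (sgn ((p i + p j) * (p h + p q)))
        (inU (PowerSeries.mk (G.D 0 i j))) (inV (PowerSeries.mk (G.D 0 h q))) =
      sgn (p i * p j + p i * p h + p j * p h) • (uInv * vInv *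
        (inU (PowerSeries.mk (G.D 0 h j)) * inV (PowerSeries.mk (G.D 0 i q)) -
          inV (PowerSeries.mk (G.D 0 h j)) * inU (PowerSeries.mk (G.D 0 i q)))) := by
  have hd' := off_two μ ▸ hd
  simp only [← G.mk_T_eq_mk_D two_pos, hi, hj, hh, hq]
  exact S.series (by omega) (by omega) (by omega) (by omega)

theorem series_scomm_D_DE (S : RTT A d p) (G : Gauss S.t 2 μ) (hd : off μ 2 = d)
    {i j h k : ℕ} (hi : i < μ 0) (hj : j < μ 0) (hh : h < μ 0) (hk : k < μ 1) :
    (vInv - uInv) * scomm (sgn ((p i + p j) * (p h + p (μ 0 + k))))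
        (inU (PowerSeries.mk (G.D 0 i j)))
        (∑ q ∈ Finset.range (μ 0), inV (PowerSeries.mk (G.D 0 h q)) *
          inV (PowerSeries.mk (G.E 0 1 q k))) =
      sgn (p i * p j + p i * p h + p j * p h) • (uInv * vInv *
        (inU (PowerSeries.mk (G.D 0 h j)) * ∑ q ∈ Finset.range (μ 0),
            inV (PowerSeries.mk (G.D 0 i q)) * inV (PowerSeries.mk (G.E 0 1 q k)) -
          inV (PowerSeries.mk (G.D 0 h j)) * ∑ q ∈ Finset.range (μ 0),
            inU (PowerSeries.mk (G.D 0 i q)) * inU (PowerSeries.mk (G.E 0 1 q k)))) := by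
  have hd' := off_two μ ▸ hd
  have hDE : ∀ {x : ℕ}, x < μ 0 → PowerSeries.mk (S.t x (μ 0 + k)) =
      ∑ q ∈ Finset.range (μ 0), PowerSeries.mk (G.D 0 x q) * PowerSeries.mk (G.E 0 1 q k) :=
    fun hx => by simpa [off] using G.mk_T_first_row_eq_D_mul_E one_lt_two hx hk
  have hrtt := S.series (i := i) (j := j) (h := h) (k := μ 0 + k)
    (by omega) (by omega) (by omega) (by omega)
  rw [G.mk_T_eq_mk_D two_pos hi hj, G.mk_T_eq_mk_D two_pos hh hj, hDE hh, hDE hi] at hrtt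
  simpa only [map_sum, map_mul] using hrtt

theorem series_sum_D_mul_scomm_E (S : RTT A d p) (G : Gauss S.t 2 μ) (hd : off μ 2 = d)
    {i j h k : ℕ} (hi : i < μ 0) (hj : j < μ 0) (hh : h < μ 0) (hk : k < μ 1) :
    ∑ q ∈ Finset.range (μ 0), inV (PowerSeries.mk (G.D 0 h q)) *
        (sgn ((p i + p j) * p q) • ((vInv - uInv) *
          scomm (sgn ((p i + p j) * (p q + p (μ 0 + k))))
            (inU (PowerSeries.mk (G.D 0 i j))) (inV (PowerSeries.mk (G.E 0 1 q k))))) =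
      inV (PowerSeries.mk (G.D 0 h j)) * (sgn (p i * p j) • (uInv * vInv *
        ∑ q ∈ Finset.range (μ 0), inU (PowerSeries.mk (G.D 0 i q)) *
          (inV (PowerSeries.mk (G.E 0 1 q k)) - inU (PowerSeries.mk (G.E 0 1 q k))))) := by
  have full := series_scomm_D_DE S G hd hi hj hh hk
  have hz (F : Series₂ A) : Commute (vInv - uInv) F := (vInv_commute F).sub_left (uInv_commute F)
  rw [mul_scomm_sum_mul hz _ (fun q => sgn ((p i + p j) * (p h + p q)))
      (fun q => sgn ((p i + p j) * (p q + p (μ 0 + k))))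
      (fun q _ => by rw [← sgn_add]; congr 1; grind),
    Finset.sum_congr rfl fun q hq => by
      rw [series_scomm_D_D S G hd hi hj hh (Finset.mem_range.1 hq)]] at full
  have hP : Commute (uInv * vInv) (inV (PowerSeries.mk (G.D 0 h j))) :=
    (uInv_commute _).mul_left (vInv_commute _)
  calc
    _ = sgn ((p i + p j) * p h) • ∑ q ∈ Finset.range (μ 0), sgn ((p i + p j) * (p h + p q)) •
          (inV (PowerSeries.mk (G.D 0 h q)) * ((vInv - uInv) *
            scomm (sgn ((p i + p j) * (p q + p (μ 0 + k))))
              (inU (PowerSeries.mk (G.D 0 i j))) (inV (PowerSeries.mk (G.E 0 1 q k))))) := by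
      simp only [Finset.smul_sum, mul_add, sgn_add, mul_smul, sgn_smul_sgn_smul, mul_smul_comm]
    _ = sgn ((p i + p j) * p h) • sgn (p i * p j + p i * p h + p j * p h) • (uInv * vInv *
          (inV (PowerSeries.mk (G.D 0 h j)) * ∑ q ∈ Finset.range (μ 0),
            inU (PowerSeries.mk (G.D 0 i q)) *
              (inV (PowerSeries.mk (G.E 0 1 q k)) - inU (PowerSeries.mk (G.E 0 1 q k))))) := by
      rw [eq_sub_of_add_eq' full]
      simp only [mul_sub, sub_mul, mul_assoc, smul_sub, Finset.mul_sum, Finset.smul_sum,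
        Finset.sum_sub_distrib, smul_mul_assoc]
      abel
    _ = _ := by
      rw [smul_smul, ← sgn_add, hP.left_comm, mul_smul_comm]
      congr 3
      grind

theorem series_scomm_D_E (S : RTT A d p) (G : Gauss S.t 2 μ) (hd : off μ 2 = d)
    {i j m k : ℕ} (hi : i < μ 0) (hj : j < μ 0) (hm : m < μ 0) (hk : k < μ 1) :
    (vInv - uInv) * scomm (sgn ((p i + p j) * (p m + p (μ 0 + k))))
        (inU (PowerSeries.mk (G.D 0 i j))) (inV (PowerSeries.mk (G.E 0 1 m k))) =
      sgn (p m * p j) • if m = j then uInv * vInv *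
        ∑ q ∈ Finset.range (μ 0), inU (PowerSeries.mk (G.D 0 i q)) *
          (inV (PowerSeries.mk (G.E 0 1 q k)) - inU (PowerSeries.mk (G.E 0 1 q k)))
      else 0 := by
  have hinv : ∀ q < μ 0, ∑ h ∈ Finset.range (μ 0),
      inV (PowerSeries.mk (G.D' 0 m h)) * inV (PowerSeries.mk (G.D 0 h q)) =
        if m = q then 1 else 0 := fun q hq => by
    simpa [apply_ite inV] using congrArg inV (G.sum_mk_D'_mul_mk_D two_pos hm hq)
  have hw := eq_ite_of_sum_mul_eq_mul (B := fun h q => inV (PowerSeries.mk (G.D 0 h q)))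
    (B' := fun m h => inV (PowerSeries.mk (G.D' 0 m h)))
    (w := fun q => sgn ((p i + p j) * p q) • ((vInv - uInv) *
      scomm (sgn ((p i + p j) * (p q + p (μ 0 + k))))
        (inU (PowerSeries.mk (G.D 0 i j))) (inV (PowerSeries.mk (G.E 0 1 q k)))))
    hinv (fun h hh => series_sum_D_mul_scomm_E S G hd hi hj hh hk) hj hm
  replace hw := congrArg (sgn ((p i + p j) * p m) • ·) hw
  simp only [sgn_smul_sgn_smul] at hw
  rw [hw]
  split_ifs with hmj
  · rw [smul_smul, ← sgn_add, hmj]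
    congr 2
    grind
  · rw [smul_zero, smul_zero]

end FirstBlock

/-- For `μ = (μ 0, μ 1)` a composition of `M + N`, the Gauss blocks
satisfy `(u-v)[D_{1;i,j}(u), E_{1;h,k}(v)] = (-1)^{|h|₁|j|₁} δ_{hj}
Σ_p D_{1;i,p}(u)(E_{1;p,k}(v) - E_{1;p,k}(u))`, stated as the equality of the
coefficients of `u^{-r} v^{-s}` for all `r, s ≥ 0`. -/
theorem statement6 [Ring A] [Algebra ℂ A] {d : ℕ} {p : ℕ → ZMod 2} {μ : ℕ → ℕ}
    (S : RTT A d p) (G : Gauss S.t 2 μ) (hd : off μ 2 = d) :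
    ∀ i j h k r s : ℕ, i < μ 0 → j < μ 0 → h < μ 0 → k < μ 1 →
      scomm (sgn ((p i + p j) * (p h + p (μ 0 + k))))
          (G.D 0 i j (r + 1)) (G.E 0 1 h k s) -
        scomm (sgn ((p i + p j) * (p h + p (μ 0 + k))))
          (G.D 0 i j r) (G.E 0 1 h k (s + 1)) =
      sgn (p h * p j) •
        (if h = j then
          (∑ q ∈ Finset.range (μ 0), G.D 0 i q r * G.E 0 1 q k s) -
            (if s = 0 then
              ∑ q ∈ Finset.range (μ 0), ∑ e ∈ Finset.range (r + 1),
                G.D 0 i q e * G.E 0 1 q k (r - e)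
             else 0)
         else 0) := by
  intro i j h k r s hi hj hh hk
  have hcoeff := congrArg (Series₂.coeff (r + 1) (s + 1)) (series_scomm_D_E S G hd hi hj hh hk)
  rw [Series₂.coeff_succ_succ_sub_mul_scomm, Series₂.coeff_smul, apply_ite (Series₂.coeff _ _),
    map_zero, Series₂.coeff_succ_succ_uInv_mul_vInv_mul] at hcoeff
  simp only [PowerSeries.coeff_mk, mul_sub, Finset.sum_sub_distrib, map_sub, map_sum,
    Series₂.coeff_inU_mul_inV, ← map_mul, Series₂.coeff_inU, coeff_mk_mul_mk] at hcoeff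
  rw [hcoeff, Finset.sum_ite_irrel, Finset.sum_const_zero]

end SuperYangian
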